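/- arXiv:1209.0587 — 2 statements merged into one kernel-verified Lean document; each statement's English description precedes it below -/
import Mathlib

section
/- For every idempotent ε of 𝓘↗∞(ℤ), the 𝓗-class of ε, namely H_ε = {α ∈ 𝓘↗∞(ℤ) : dom α = dom ε and ran α = dom ε}, is a group under composition with identity element ε, and this group is isomorphic to the additive group ℤ of integers. -/
/-- A monotone injective partial self-map of `ℤ` with cofinite domain and cofinite range,
encoded as a function `ℤ → Option ℤ` where `none` means "undefined". -/
structure IsMIP (f : ℤ → Option ℤ) : Prop where
  inj : ∀ ⦃x y a : ℤ⦄, f x = some a → f y = some a → x = y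
  mono : ∀ ⦃x y a b : ℤ⦄, f x = some a → f y = some b → x ≤ y → a ≤ b
  cofin_dom : {x : ℤ | f x = none}.Finite
  cofin_ran : {y : ℤ | ∀ x : ℤ, f x ≠ some y}.Finite

/-- The monoid `𝓘↗∞(ℤ)` of monotone injective partial self-maps of `ℤ`
with cofinite domain and cofinite range. -/
def IZ : Type := {f : ℤ → Option ℤ // IsMIP f}

namespace IZ

/-- Composition of partial maps, written left-to-right: `(pcomp f g) x = g (f x)`. -/
def pcomp (f g : ℤ → Option ℤ) : ℤ → Option ℤ := fun x => (f x).bind g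

theorem isMIP_id : IsMIP (fun x : ℤ => some x) := by
  refine ⟨?_, ?_, ?_, ?_⟩
  · intro x y a hx hy; simp_all
  · intro x y a b hx hy h; simp_all
  · simp
  · have : {y : ℤ | ∀ x : ℤ, (fun x : ℤ => some x) x ≠ some y} = ∅ := by
      ext y; simp
    rw [this]; exact Set.finite_empty

theorem isMIP_comp {f g : ℤ → Option ℤ} (hf : IsMIP f) (hg : IsMIP g) :
    IsMIP (pcomp f g) := by
  refine ⟨?_, ?_, ?_, ?_⟩
  · intro x y a hx hy
    rw [pcomp, Option.bind_eq_some_iff] at hx hy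
    obtain ⟨b, hb, hba⟩ := hx
    obtain ⟨c, hc, hca⟩ := hy
    have hbc : b = c := hg.inj hba hca
    subst hbc
    exact hf.inj hb hc
  · intro x y a b hx hy hxy
    rw [pcomp, Option.bind_eq_some_iff] at hx hy
    obtain ⟨p, hp, hpa⟩ := hx
    obtain ⟨q, hq, hqb⟩ := hy
    exact hg.mono hpa hqb (hf.mono hp hq hxy)
  · have hsub : {x : ℤ | pcomp f g x = none} ⊆
        {x : ℤ | f x = none} ∪ f ⁻¹' (Option.some '' {a : ℤ | g a = none}) := by
      intro x hx
      simp only [Set.mem_setOf_eq, pcomp] at hx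
      cases hfx : f x with
      | none => exact Or.inl hfx
      | some a =>
        right
        rw [hfx] at hx
        simp only [Option.bind_some] at hx
        exact ⟨a, hx, hfx.symm⟩
    refine Set.Finite.subset (Set.Finite.union hf.cofin_dom ?_) hsub
    refine Set.Finite.preimage ?_ (hg.cofin_dom.image _)
    intro x hx y hy hxy
    obtain ⟨a, _, ha⟩ := hx
    obtain ⟨b, _, hb⟩ := hy
    have hfa : f x = some a := ha.symm
    have hfb : f y = some b := hb.symm
    have : some a = some b := by rw [← hfa, ← hfb, hxy]
    rw [Option.some_inj] at this
    subst this
    exact hf.inj hfa hfb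
  · have hsub : {y : ℤ | ∀ x : ℤ, pcomp f g x ≠ some y} ⊆
        {y : ℤ | ∀ x : ℤ, g x ≠ some y} ∪
          ((fun a => (g a).getD 0) '' {a : ℤ | ∀ x : ℤ, f x ≠ some a}) := by
      intro y hy
      simp only [Set.mem_setOf_eq] at hy
      by_cases hgy : ∀ a : ℤ, g a ≠ some y
      · exact Or.inl hgy
      · push_neg at hgy
        obtain ⟨a, hga⟩ := hgy
        right
        refine ⟨a, ?_, by simp [hga]⟩
        intro x hfx
        exact hy x (by simp [pcomp, hfx, hga])
    exact Set.Finite.subset (Set.Finite.union hg.cofin_ran (hf.cofin_ran.image _)) hsub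

instance : Monoid IZ where
  one := ⟨fun x => some x, isMIP_id⟩
  mul a b := ⟨pcomp a.1 b.1, isMIP_comp a.2 b.2⟩
  mul_assoc a b c := by
    apply Subtype.ext
    funext x
    exact Option.bind_assoc (a.1 x) b.1 c.1
  one_mul a := by
    apply Subtype.ext
    funext x
    rfl
  mul_one a := by
    apply Subtype.ext
    funext x
    show (a.1 x).bind some = a.1 x
    cases a.1 x <;> rfl

theorem mul_def (a b : IZ) : (a * b).1 = pcomp a.1 b.1 := rfl

theorem one_def : (1 : IZ).1 = fun x : ℤ => some x := rfl

/-- The domain of an element of `𝓘↗∞(ℤ)`. -/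
def dom (a : IZ) : Set ℤ := {x : ℤ | a.1 x ≠ none}

/-- The range of an element of `𝓘↗∞(ℤ)`. -/
def ran (a : IZ) : Set ℤ := {y : ℤ | ∃ x : ℤ, a.1 x = some y}

end IZ

/-!
The domain `D` of an idempotent `ε` is a cofinite subset of `ℤ`, hence order-isomorphic to `ℤ`.
An element of the `𝓗`-class of `ε` is a monotone bijection of `D` onto itself, extended by
"undefined" off `D`, and composition of partial maps becomes composition of these bijections.
So `H_ε ≅ Aut(D, ≤) ≅ Aut(ℤ, ≤)`, and every order automorphism `f` of `ℤ` commutes with the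
successor map, hence is the translation `n ↦ n + f 0`; this identifies `Aut(ℤ, ≤)` with `(ℤ, +)`.
-/

theorem Int.orderIso_apply_eq_add (f : ℤ ≃o ℤ) (n : ℤ) : f n = n + f 0 := by
  have step : ∀ m : ℤ, f (m + 1) = f m + 1 := fun m => by
    simpa only [Order.succ_eq_add_one] using f.map_succ m
  induction n using Int.induction_on with
  | zero => simp
  | succ m ih => rw [step, ih]; ring
  | pred m ih =>
    have := step (-(m : ℤ) - 1)
    rw [sub_add_cancel] at this
    omega

def Int.orderIsoEquiv : (ℤ ≃o ℤ) ≃ ℤ where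
  toFun f := f 0
  invFun k := OrderIso.addRight k
  left_inv f := by ext n; simp [Int.orderIso_apply_eq_add f n]
  right_inv k := by simp

theorem Int.orderIsoEquiv_trans (f g : ℤ ≃o ℤ) :
    Int.orderIsoEquiv (f.trans g) = Int.orderIsoEquiv f + Int.orderIsoEquiv g := by
  simp only [Int.orderIsoEquiv, Equiv.coe_fn_mk, OrderIso.trans_apply]
  rw [Int.orderIso_apply_eq_add g, add_comm]

noncomputable def Int.orderIsoOfComplFinite (S : Set ℤ) (hS : Sᶜ.Finite) : S ≃o ℤ := by
  classical
  have : Nonempty S := (Set.infinite_of_finite_compl hS).nonempty.to_subtype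
  have : NoMaxOrder S := ⟨fun a => by
    obtain ⟨y, hy, hyS⟩ := ((Set.Ioi_infinite (a : ℤ)).sdiff hS).nonempty
    exact ⟨⟨y, not_not.mp hyS⟩, hy⟩⟩
  have : NoMinOrder S := ⟨fun a => by
    obtain ⟨y, hy, hyS⟩ := ((Set.Iio_infinite (a : ℤ)).sdiff hS).nonempty
    exact ⟨⟨y, not_not.mp hyS⟩, hy⟩⟩
  letI := LinearLocallyFiniteOrder.succOrder S
  letI := LinearLocallyFiniteOrder.predOrder S
  exact orderIsoIntOfLinearSuccPredArch

theorem OrderIso.orderIsoCongr_self_trans {α β : Type*} [Preorder α] [Preorder β] (e : α ≃o β)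
    (σ τ : α ≃o α) :
    e.orderIsoCongr e (σ.trans τ) = (e.orderIsoCongr e σ).trans (e.orderIsoCongr e τ) := by
  ext; simp

noncomputable def Int.autEquivOfComplFinite (S : Set ℤ) (hS : Sᶜ.Finite) : (S ≃o S) ≃ ℤ :=
  (OrderIso.orderIsoCongr (Int.orderIsoOfComplFinite S hS) (Int.orderIsoOfComplFinite S hS)).trans
    Int.orderIsoEquiv

theorem Int.autEquivOfComplFinite_trans (S : Set ℤ) (hS : Sᶜ.Finite) (σ τ : S ≃o S) :
    Int.autEquivOfComplFinite S hS (σ.trans τ) =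
      Int.autEquivOfComplFinite S hS σ + Int.autEquivOfComplFinite S hS τ := by
  simp only [Int.autEquivOfComplFinite, Equiv.trans_apply, OrderIso.orderIsoCongr_self_trans,
    Int.orderIsoEquiv_trans]

namespace IZ

theorem dom_compl_finite (α : IZ) : (dom α)ᶜ.Finite := by
  simpa [dom, Set.compl_ofPred] using α.2.cofin_dom

theorem eq_none_of_notMem_dom {α : IZ} {x : ℤ} (hx : x ∉ dom α) : α.1 x = none :=
  not_not.mp hx

section OfOrderIso

variable {D : Set ℤ}

open Classical in
noncomputable def extendFun (σ : D → D) (x : ℤ) : Option ℤ :=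
  if h : x ∈ D then some (σ ⟨x, h⟩ : ℤ) else none

theorem extendFun_of_mem (σ : D → D) {x : ℤ} (hx : x ∈ D) :
    extendFun σ x = some (σ ⟨x, hx⟩ : ℤ) := dif_pos hx

theorem extendFun_of_notMem (σ : D → D) {x : ℤ} (hx : x ∉ D) : extendFun σ x = none :=
  dif_neg hx

theorem extendFun_eq_some_iff (σ : D → D) {x y : ℤ} :
    extendFun σ x = some y ↔ ∃ hx : x ∈ D, (σ ⟨x, hx⟩ : ℤ) = y := by
  by_cases hx : x ∈ D <;> simp [extendFun, hx]

theorem isMIP_extendFun (hD : Dᶜ.Finite) (σ : D ≃o D) : IsMIP (extendFun σ) where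
  inj x y a hx hy := by
    obtain ⟨hxD, rfl⟩ := (extendFun_eq_some_iff σ).1 hx
    obtain ⟨hyD, hxy⟩ := (extendFun_eq_some_iff σ).1 hy
    exact congrArg Subtype.val (σ.injective (Subtype.ext hxy)).symm
  mono x y a b hx hy hxy := by
    obtain ⟨hxD, rfl⟩ := (extendFun_eq_some_iff σ).1 hx
    obtain ⟨hyD, rfl⟩ := (extendFun_eq_some_iff σ).1 hy
    exact σ.monotone (show (⟨x, hxD⟩ : D) ≤ ⟨y, hyD⟩ from hxy)
  cofin_dom := hD.subset fun x hx hxD => by simp [extendFun_of_mem σ hxD] at hx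
  cofin_ran := hD.subset fun y hy hyD =>
    hy (σ.symm ⟨y, hyD⟩) (by simp [extendFun_of_mem σ (σ.symm ⟨y, hyD⟩).2])

noncomputable def ofOrderIso (hD : Dᶜ.Finite) (σ : D ≃o D) : IZ :=
  ⟨extendFun σ, isMIP_extendFun hD σ⟩

theorem ofOrderIso_val (hD : Dᶜ.Finite) (σ : D ≃o D) : (ofOrderIso hD σ).1 = extendFun σ := rfl

variable (hD : Dᶜ.Finite)

theorem ofOrderIso_mul (σ τ : D ≃o D) :
    ofOrderIso hD σ * ofOrderIso hD τ = ofOrderIso hD (σ.trans τ) := by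
  refine Subtype.ext (funext fun x => ?_)
  change (extendFun σ x).bind (extendFun τ) = extendFun (σ.trans τ) x
  by_cases hx : x ∈ D
  · simp [extendFun_of_mem _ hx, extendFun_of_mem _ (σ ⟨x, hx⟩).2]
  · simp [extendFun_of_notMem _ hx]

theorem ofOrderIso_injective : Function.Injective (ofOrderIso hD) := fun σ τ h =>
  OrderIso.ext <| funext fun x => Subtype.ext <| Option.some_injective _ <| by
    simpa [ofOrderIso, extendFun_of_mem _ x.2] using congrFun (congrArg Subtype.val h) x

theorem exists_ofOrderIso_eq {α : IZ} (hd : dom α = D) (hr : ran α = D) :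
    ∃ σ : D ≃o D, ofOrderIso hD σ = α := by
  have hdef (x : D) : (α.1 x).isSome := Option.isSome_iff_ne_none.2 (hd ▸ x.2)
  have hran (x : D) : (α.1 x).get (hdef x) ∈ D := by
    have : (α.1 x).get (hdef x) ∈ ran α := ⟨x, (Option.some_get _).symm⟩
    rwa [hr] at this
  let f (x : D) : D := ⟨(α.1 x).get (hdef x), hran x⟩
  have hf (x : D) : α.1 x = some (f x : ℤ) := (Option.some_get _).symm
  have hmono : StrictMono f := Monotone.strictMono_of_injective
    (fun x y hxy => α.2.mono (hf x) (hf y) hxy)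
    (fun x y hxy => Subtype.ext (α.2.inj (hf x) (hxy ▸ hf y)))
  have hsurj : Function.Surjective f := fun y => by
    obtain ⟨x, hx⟩ : (y : ℤ) ∈ ran α := hr ▸ y.2
    have hxD : x ∈ D := hd ▸ fun h => by simp [h] at hx
    exact ⟨⟨x, hxD⟩, Subtype.ext (Option.some_injective _ ((hf _).symm.trans hx))⟩
  refine ⟨hmono.orderIsoOfSurjective f hsurj, Subtype.ext (funext fun x => ?_)⟩
  by_cases hx : x ∈ D
  · simp [ofOrderIso, extendFun_of_mem _ hx, hf ⟨x, hx⟩]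
  · rw [ofOrderIso_val, extendFun_of_notMem _ hx, eq_none_of_notMem_dom (hd ▸ hx)]

theorem range_ofOrderIso : Set.range (ofOrderIso hD) = {α : IZ | dom α = D ∧ ran α = D} := by
  ext α
  constructor
  · rintro ⟨σ, rfl⟩
    refine ⟨Set.ext fun x => ?_, Set.ext fun y => ?_⟩
    · by_cases hx : x ∈ D <;> simp [dom, ofOrderIso, extendFun, hx]
    · simp only [ran, ofOrderIso, extendFun_eq_some_iff, Set.mem_ofPred_eq]
      exact ⟨fun ⟨_, _, h⟩ => h ▸ (σ _).2,
        fun hy => ⟨_, (σ.symm ⟨y, hy⟩).2, by simp⟩⟩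
  · rintro ⟨hd, hr⟩
    exact exists_ofOrderIso_eq hD hd hr

end OfOrderIso

theorem eq_ofOrderIso_refl_of_mul_self {ε : IZ} (hε : ε * ε = ε) (hD : (dom ε)ᶜ.Finite) :
    ε = ofOrderIso hD (OrderIso.refl _) := by
  refine Subtype.ext (funext fun x => ?_)
  by_cases hx : x ∈ dom ε
  · obtain ⟨y, hy⟩ := Option.ne_none_iff_exists'.mp hx
    have hyy : ε.1 y = some y := by
      simpa [mul_def, pcomp, hy] using congrFun (congrArg Subtype.val hε) x
    rw [ofOrderIso_val, extendFun_of_mem _ hx, hy]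
    exact congrArg some (ε.2.inj hy hyy).symm
  · rw [ofOrderIso_val, extendFun_of_notMem _ hx, eq_none_of_notMem_dom hx]

end IZ

/-- For every idempotent `ε` of `𝓘↗∞(ℤ)`, its `𝓗`-class
`H_ε = {α : dom α = dom ε ∧ ran α = dom ε}` is a group under composition with identity
`ε`, and this group is isomorphic to the additive group `ℤ`. -/
theorem statement11 (ε : IZ) (hε : ε * ε = ε) :
    let H : Set IZ := {α : IZ | IZ.dom α = IZ.dom ε ∧ IZ.ran α = IZ.dom ε}
    ε ∈ H ∧
    (∀ α ∈ H, ∀ β ∈ H, α * β ∈ H) ∧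
    (∀ α ∈ H, ε * α = α ∧ α * ε = α) ∧
    (∀ α ∈ H, ∃ β ∈ H, α * β = ε ∧ β * α = ε) ∧
    ∃ g : H → ℤ, Function.Bijective g ∧
      ∀ (a b : H) (hab : a.1 * b.1 ∈ H), g ⟨a.1 * b.1, hab⟩ = g a + g b := by
  intro H
  have hD := IZ.dom_compl_finite ε
  have hH : H = Set.range (IZ.ofOrderIso hD) := (IZ.range_ofOrderIso hD).symm
  have hε' := IZ.eq_ofOrderIso_refl_of_mul_self hε hD
  clear_value H
  subst hH
  -- `ε` occurs in `dom ε`, so the domain is abstracted before `ε` is replaced by the identity of `D`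
  generalize IZ.dom ε = D at hD hε' ⊢
  subst hε'
  let E := Equiv.ofInjective _ (IZ.ofOrderIso_injective hD)
  refine ⟨⟨_, rfl⟩, ?_, ?_, ?_,
    E.symm.trans (Int.autEquivOfComplFinite D hD), Equiv.bijective _, ?_⟩
  · rintro _ ⟨σ, rfl⟩ _ ⟨τ, rfl⟩
    exact ⟨σ.trans τ, (IZ.ofOrderIso_mul hD σ τ).symm⟩
  · rintro _ ⟨σ, rfl⟩
    rw [IZ.ofOrderIso_mul, IZ.ofOrderIso_mul, OrderIso.refl_trans, OrderIso.trans_refl]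
    exact ⟨rfl, rfl⟩
  · rintro _ ⟨σ, rfl⟩
    refine ⟨_, ⟨σ.symm, rfl⟩, ?_, ?_⟩ <;>
      rw [IZ.ofOrderIso_mul] <;> simp
  · rintro ⟨_, σ, rfl⟩ ⟨_, τ, rfl⟩ hab
    simp only [E, Equiv.trans_apply, IZ.ofOrderIso_mul, Equiv.ofInjective_symm_apply,
      Int.autEquivOfComplFinite_trans]
end

section
/- Let S be a semigroup and h : 𝓘↗∞(ℤ) → S a semigroup homomorphism that is not constant (not annihilating). Then either h is injective, or the image h(𝓘↗∞(ℤ)) is a subgroup of S (i.e. a subsemigroup that is a group under the induced operation). -/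
namespace IZ

open Function

@[ext]
theorem ext {a b : IZ} (hab : ∀ x, a.1 x = b.1 x) : a = b := Subtype.ext (funext hab)

theorem mul_apply (a b : IZ) (x : ℤ) : (a * b).1 x = (a.1 x).bind b.1 := rfl

theorem one_apply (x : ℤ) : (1 : IZ).1 x = some x := rfl

section Inverse

open scoped Classical in
noncomputable def partialInv (f : ℤ → Option ℤ) : ℤ → Option ℤ := fun y =>
  if hy : ∃ x, f x = some y then some hy.choose else none

variable {f : ℤ → Option ℤ}

theorem partialInv_eq_some (hf : IsMIP f) {x y : ℤ} : partialInv f y = some x ↔ f x = some y := by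
  unfold partialInv
  split_ifs with hy
  · exact ⟨fun hx => Option.some_injective _ hx ▸ hy.choose_spec,
      fun hx => congrArg some (hf.inj hy.choose_spec hx)⟩
  · exact ⟨fun hx => (nomatch hx), fun hx => absurd ⟨x, hx⟩ hy⟩

theorem partialInv_eq_none {y : ℤ} : partialInv f y = none ↔ ∀ x, f x ≠ some y := by
  unfold partialInv
  split_ifs with hy <;> simp_all

theorem isMIP_partialInv (hf : IsMIP f) : IsMIP (partialInv f) where
  inj x y a hx hy := by
    rw [partialInv_eq_some hf] at hx hy
    exact Option.some_injective _ (hx.symm.trans hy)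
  mono x y a b hx hy hxy := by
    rw [partialInv_eq_some hf] at hx hy
    by_contra! hba
    obtain rfl := hxy.antisymm (hf.mono hy hx hba.le)
    exact hba.ne (hf.inj hy hx)
  cofin_dom := by simpa only [partialInv_eq_none] using hf.cofin_ran
  cofin_ran := hf.cofin_dom.subset fun x hx => by
    by_contra hne
    obtain ⟨y, hy⟩ := Option.ne_none_iff_exists'.mp hne
    exact hx y ((partialInv_eq_some hf).2 hy)

noncomputable instance : Inv IZ := ⟨fun a => ⟨partialInv a.1, isMIP_partialInv a.2⟩⟩

theorem inv_apply_eq_some (a : IZ) {x y : ℤ} : a⁻¹.1 y = some x ↔ a.1 x = some y :=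
  partialInv_eq_some a.2

theorem inv_apply_eq_none (a : IZ) {y : ℤ} : a⁻¹.1 y = none ↔ ∀ x, a.1 x ≠ some y :=
  partialInv_eq_none

end Inverse

section PartialIdentity

open scoped Classical in
noncomputable def idOff (F : Set ℤ) (hF : F.Finite) : IZ :=
  ⟨fun x => if x ∈ F then none else some x,
    { inj := fun x y a hx hy => by split_ifs at hx hy; simp_all
      mono := fun x y a b hx hy hxy => by split_ifs at hx hy; simp_all
      cofin_dom := hF.subset fun x hx => by by_contra hxF; simp_all
      cofin_ran := hF.subset fun y hy => by by_contra hyF; exact hy y (if_neg hyF) }⟩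

variable {F : Set ℤ} {hF : F.Finite}

theorem idOff_apply_of_mem {x : ℤ} (hx : x ∈ F) : (idOff F hF).1 x = none := if_pos hx

theorem idOff_apply_of_notMem {x : ℤ} (hx : x ∉ F) : (idOff F hF).1 x = some x := if_neg hx

theorem idOff_empty : idOff ∅ Set.finite_empty = 1 := by
  ext x : 1; exact idOff_apply_of_notMem (Set.notMem_empty x)

theorem idOff_insert (y : ℤ) (hyF : (insert y F).Finite) :
    idOff (insert y F) hyF = idOff {y} (Set.finite_singleton y) * idOff F hF := by
  ext x : 1
  rw [mul_apply]
  by_cases hxy : x = y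
  · rw [idOff_apply_of_mem (Or.inl hxy), idOff_apply_of_mem (F := {y}) hxy, Option.bind_none]
  rw [idOff_apply_of_notMem (F := {y}) hxy, Option.bind_some]
  by_cases hxF : x ∈ F
  · rw [idOff_apply_of_mem (Or.inr hxF), idOff_apply_of_mem hxF]
  · rw [idOff_apply_of_notMem (by simp [hxy, hxF]), idOff_apply_of_notMem hxF]

theorem idOff_mul_of_forall {w : IZ} (hw : ∀ x ∈ F, w.1 x = none) : idOff F hF * w = w := by
  ext x : 1
  by_cases hx : x ∈ F
  · rw [mul_apply, idOff_apply_of_mem hx, hw x hx, Option.bind_none]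
  · rw [mul_apply, idOff_apply_of_notMem hx, Option.bind_some]

theorem mul_idOff_of_forall {a : IZ} (ha : ∀ x y, a.1 x = some y → y ∉ F) :
    a * idOff F hF = a := by
  ext x : 1
  rw [mul_apply]
  cases hx : a.1 x with
  | none => rfl
  | some y => exact idOff_apply_of_notMem (ha x y hx)

theorem mul_inv_eq_idOff (a : IZ) : a * a⁻¹ = idOff {x | a.1 x = none} a.2.cofin_dom := by
  ext x : 1
  rw [mul_apply]
  cases hx : a.1 x with
  | none => exact (idOff_apply_of_mem hx).symm
  | some y =>
    rw [idOff_apply_of_notMem (by simp [hx]), Option.bind_some]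
    exact (inv_apply_eq_some a).2 hx

theorem inv_mul_eq_idOff (a : IZ) :
    a⁻¹ * a = idOff {y | ∀ x, a.1 x ≠ some y} a.2.cofin_ran := by
  ext y : 1
  rw [mul_apply]
  cases hy : a⁻¹.1 y with
  | none =>
    exact Eq.symm <| idOff_apply_of_mem (F := {y | ∀ x, a.1 x ≠ some y})
      ((inv_apply_eq_none a).1 hy)
  | some x =>
    have hxy := (inv_apply_eq_some a).1 hy
    rw [idOff_apply_of_notMem (F := {y | ∀ x, a.1 x ≠ some y}) fun hy' => hy' x hxy,
      Option.bind_some, hxy]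

theorem mul_inv_eq_one_of_total {a : IZ} (ha : ∀ x, a.1 x ≠ none) : a * a⁻¹ = 1 := by
  rw [mul_inv_eq_idOff]
  ext x : 1
  exact idOff_apply_of_notMem (ha x)

end PartialIdentity

def shift (k : ℤ) : IZ :=
  ⟨fun x => some (x + k),
    { inj := fun x y a hx hy => by simp only [Option.some_inj] at hx hy; omega
      mono := fun x y a b hx hy hxy => by simp only [Option.some_inj] at hx hy; omega
      cofin_dom := by simp
      cofin_ran := Set.finite_empty.subset fun y hy => hy (y - k) (by simp) }⟩

theorem shift_mul_shift_neg (k : ℤ) : shift k * shift (-k) = 1 := by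
  ext x : 1
  rw [mul_apply]
  simp [shift, one_apply]

theorem shift_mul_idOff_mul_shift_neg (k : ℤ) {F : Set ℤ} (hF : F.Finite) :
    shift k * idOff F hF * shift (-k) =
      idOff ((· + k) ⁻¹' F) (hF.preimage (add_left_injective k).injOn) := by
  ext x : 1
  rw [mul_apply, mul_apply]
  by_cases hx : x + k ∈ F
  · simp [shift, idOff_apply_of_mem, hx]
  · simp [shift, idOff_apply_of_notMem, hx]

/-- Fixes `x` and moves every other point away from `x` by `K`, so its range meets
`[x - K, x + K]` only in `x`. -/
def jump (x : ℤ) (K : ℕ) : IZ :=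
  ⟨fun z => some (if z < x then z - K else if z = x then x else z + K),
    { inj := fun z w a hz hw => by simp only [Option.some_inj] at hz hw; split_ifs at hz hw <;> omega
      mono := fun z w a b hz hw hzw => by
        simp only [Option.some_inj] at hz hw; split_ifs at hz hw <;> omega
      cofin_dom := by simp
      cofin_ran := (Set.finite_Icc (x - K) (x + K)).subset fun y hy => by
        by_contra hyI
        rw [Set.mem_Icc, not_and_or, not_le, not_le] at hyI
        rcases hyI with hlt | hgt
        · exact hy (y + K) (congrArg some (by split_ifs <;> omega))
        · exact hy (y - K) (congrArg some (by split_ifs <;> omega)) }⟩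

theorem exists_total_fixing_avoiding (x : ℤ) {F : Set ℤ} (hF : F.Finite) (hx : x ∉ F) :
    ∃ c : IZ, c * c⁻¹ = 1 ∧ c.1 x = some x ∧ ∀ z y, c.1 z = some y → y ∉ F := by
  obtain ⟨K, hK⟩ := (hF.image fun y => (y - x).natAbs).bddAbove
  refine ⟨jump x K, ?_, by simp [jump], fun z y hzy hyF => ?_⟩
  · exact mul_inv_eq_one_of_total fun z => by simp [jump]
  · have hyK : (y - x).natAbs ≤ K := hK ⟨y, hyF, rfl⟩
    simp only [jump, Option.some_inj] at hzy
    split_ifs at hzy <;> first | omega | exact hx (by omega ▸ hyF)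

section Hom

variable {S : Type*} [Mul S] (h : IZ →ₙ* S)

theorem map_mul_mul_congr {u v : IZ} (huv : h u = h v) (c d : IZ) :
    h (c * u * d) = h (c * v * d) := by
  simp only [map_mul, huv]

theorem map_idOff_eq_map_one_of_idOff_mul {F : Set ℤ} (hF : F.Finite) {w : IZ} (hw : h w = h 1)
    (hFw : idOff F hF * w = w) : h (idOff F hF) = h 1 :=
  calc h (idOff F hF) = h (idOff F hF * 1) := by rw [mul_one]
    _ = h (idOff F hF * w) := by rw [map_mul, map_mul, hw]
    _ = h 1 := by rw [hFw, hw]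

/-- Conjugate by a total `c` fixing `x` whose range misses `F` and `v x`: then
`c * idOff F hF * c⁻¹ = c * c⁻¹ = 1`, while `c * v * c⁻¹` is undefined at `x`. -/
theorem exists_map_eq_map_one_apply_eq_none {F : Set ℤ} {hF : F.Finite} {v : IZ}
    (hv : h v = h (idOff F hF)) {x : ℤ} (hxF : x ∉ F) (hvx : v.1 x ≠ some x) :
    ∃ w : IZ, h w = h 1 ∧ w.1 x = none := by
  have hG : (F ∪ {y | v.1 x = some y}).Finite :=
    hF.union (Set.Subsingleton.finite fun y hy z hz => Option.some_injective _ (hy.symm.trans hz))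
  obtain ⟨c, hc, hcx, hcF⟩ := exists_total_fixing_avoiding x hG (by simp [hxF, hvx])
  refine ⟨c * v * c⁻¹, ?_, ?_⟩
  · rw [map_mul_mul_congr h hv, mul_idOff_of_forall fun z y hzy hyF => hcF z y hzy (Or.inl hyF),
      hc]
  · rw [mul_apply, mul_apply, hcx, Option.bind_some]
    cases hvx' : v.1 x with
    | none => rfl
    | some y =>
      exact (inv_apply_eq_none c).2 fun z hzy => hcF z y hzy (Or.inr hvx')

theorem exists_map_idOff_eq_map_one_of_map_eq {a b : IZ} (hab : h a = h b) {x p : ℤ}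
    (ha : a.1 x = some p) (hb : b.1 x ≠ some p) :
    ∃ (F : Set ℤ) (hF : F.Finite), F.Nonempty ∧ h (idOff F hF) = h 1 := by
  have hv : h (b * a⁻¹) = h (idOff {x | a.1 x = none} a.2.cofin_dom) := by
    rw [← mul_inv_eq_idOff, map_mul, map_mul, hab]
  have hvx : (b * a⁻¹).1 x ≠ some x := by
    rw [mul_apply]
    cases hbx : b.1 x with
    | none => exact nofun
    | some q =>
      rw [Option.bind_some, ne_eq, inv_apply_eq_some, ha]
      exact fun hpq => hb (hbx.trans hpq.symm)
  obtain ⟨w, hw, hwx⟩ := exists_map_eq_map_one_apply_eq_none h hv (by simp [ha]) hvx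
  exact ⟨_, w.2.cofin_dom, ⟨x, hwx⟩,
    map_idOff_eq_map_one_of_idOff_mul h _ hw (idOff_mul_of_forall fun _ => id)⟩

theorem exists_map_idOff_eq_map_one (hh : ¬ Injective h) :
    ∃ (F : Set ℤ) (hF : F.Finite), F.Nonempty ∧ h (idOff F hF) = h 1 := by
  obtain ⟨a, b, hab, hne⟩ := not_injective_iff.mp hh
  obtain ⟨x, hx⟩ : ∃ x, a.1 x ≠ b.1 x := by
    by_contra! hall
    exact hne (ext hall)
  cases ha : a.1 x with
  | some p => exact exists_map_idOff_eq_map_one_of_map_eq h hab ha (ha ▸ hx.symm)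
  | none =>
    obtain ⟨q, hq⟩ := Option.ne_none_iff_exists'.mp (ha ▸ hx.symm)
    exact exists_map_idOff_eq_map_one_of_map_eq h hab.symm hq (by simp [ha])

theorem map_idOff_singleton_eq_map_one {F : Set ℤ} {hF : F.Finite} (hF1 : h (idOff F hF) = h 1)
    {x₀ : ℤ} (hx₀ : x₀ ∈ F) (y : ℤ) : h (idOff {y} (Set.finite_singleton y)) = h 1 := by
  have hshift : h (shift (x₀ - y) * idOff F hF * shift (-(x₀ - y))) = h 1 := by
    rw [map_mul_mul_congr h hF1, mul_one, shift_mul_shift_neg]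
  rw [shift_mul_idOff_mul_shift_neg] at hshift
  refine map_idOff_eq_map_one_of_idOff_mul h _ hshift (idOff_mul_of_forall ?_)
  rintro z rfl
  exact idOff_apply_of_mem (by simpa using hx₀)

theorem map_idOff_eq_map_one_of_not_injective (hh : ¬ Injective h) (F : Set ℤ) (hF : F.Finite) :
    h (idOff F hF) = h 1 := by
  obtain ⟨D, hD, ⟨x₀, hx₀⟩, hD1⟩ := exists_map_idOff_eq_map_one h hh
  induction F, hF using Set.Finite.induction_on with
  | empty => rw [idOff_empty]
  | @insert y F _ hF ih =>
    rw [idOff_insert (hF := hF), map_mul, map_idOff_singleton_eq_map_one h hD1 hx₀, ih, ← map_mul,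
      mul_one]

end Hom

end IZ

theorem statement14_general {S : Type*} [Semigroup S] (h : IZ → S)
    (hhom : ∀ a b : IZ, h (a * b) = h a * h b) :
    Function.Injective h ∨
      ((∀ x ∈ Set.range h, ∀ y ∈ Set.range h, x * y ∈ Set.range h) ∧
        ∃ e ∈ Set.range h, (∀ x ∈ Set.range h, e * x = x ∧ x * e = x) ∧
          ∀ x ∈ Set.range h, ∃ y ∈ Set.range h, x * y = e ∧ y * x = e) := by
  by_cases hinj : Function.Injective h
  · exact Or.inl hinj
  have hidOff := IZ.map_idOff_eq_map_one_of_not_injective ⟨h, hhom⟩ hinj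
  refine Or.inr ⟨?_, h 1, ⟨1, rfl⟩, ?_, ?_⟩
  · rintro _ ⟨a, rfl⟩ _ ⟨b, rfl⟩
    exact ⟨a * b, hhom a b⟩
  · rintro _ ⟨a, rfl⟩
    rw [← hhom, ← hhom, one_mul, mul_one]
    exact ⟨rfl, rfl⟩
  · rintro _ ⟨a, rfl⟩
    refine ⟨h a⁻¹, ⟨a⁻¹, rfl⟩, ?_, ?_⟩
    · rw [← hhom, IZ.mul_inv_eq_idOff]
      exact hidOff _ _
    · rw [← hhom, IZ.inv_mul_eq_idOff]
      exact hidOff _ _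

/-- Every non-constant (non-annihilating) semigroup homomorphism `h` from
`𝓘↗∞(ℤ)` into a semigroup `S` is either injective, or its image is a subgroup of `S`
(a subsemigroup which is a group under the induced operation). -/
theorem statement14 {S : Type*} [Semigroup S] (h : IZ → S)
    (hhom : ∀ a b : IZ, h (a * b) = h a * h b)
    (hnc : ∃ a b : IZ, h a ≠ h b) :
    Function.Injective h ∨
      ((∀ x ∈ Set.range h, ∀ y ∈ Set.range h, x * y ∈ Set.range h) ∧
        ∃ e ∈ Set.range h, (∀ x ∈ Set.range h, e * x = x ∧ x * e = x) ∧
          ∀ x ∈ Set.range h, ∃ y ∈ Set.range h, x * y = e ∧ y * x = e) :=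
  statement14_general h hhom
end
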